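/- arXiv:math/0305418 — 2 statements merged into one kernel-verified Lean document; each statement's English description precedes it below -/
import Mathlib

section
/- The presented group ⟨a, b | (ab)² = (ba)²⟩ (with single relator (ab)²·((ba)²)⁻¹) is big, i.e. it contains a subgroup which is free of rank 2. -/
/-- A group `G` is big if it contains a free subgroup of rank 2, i.e. there is an
injective group homomorphism from the free group on two generators into `G`. -/
def Big (G : Type*) [Group G] : Prop :=
  ∃ f : FreeGroup (Fin 2) →* G, Function.Injective f

/-- The single relator `(ab)²((ba)²)⁻¹` of the presentation `⟨a, b | (ab)² = (ba)²⟩`. -/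
def rels : Set (FreeGroup (Fin 2)) :=
  {(FreeGroup.of 0 * FreeGroup.of 1) ^ 2 * ((FreeGroup.of 1 * FreeGroup.of 0) ^ 2)⁻¹}

namespace BigAux

open SemidirectProduct

/-- The swap on `Bool` as an equivalence. -/
def swap : Bool ≃ Bool := ⟨not, not, Bool.not_not, Bool.not_not⟩

/-- The automorphism of `FreeGroup Bool` swapping the generators. -/
def σ : MulAut (FreeGroup Bool) := FreeGroup.freeGroupCongr swap

/-- The action of `ℤ` by powers of `σ`. -/
def θ : Multiplicative ℤ →* MulAut (FreeGroup Bool) := zpowersHom _ σ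

/-- The target group: `FreeGroup Bool ⋊ ℤ`. -/
abbrev H := FreeGroup Bool ⋊[θ] Multiplicative ℤ

def A : H := inl (FreeGroup.of false)
def T : H := inr (Multiplicative.ofAdd 1)

lemma sigma_of (b : Bool) : σ (FreeGroup.of b) = FreeGroup.of (!b) := by
  simp [σ, swap]

lemma T_A_T : T * A * T⁻¹ = inl (FreeGroup.of true) := by
  rw [A, T, ← map_inv, ← inl_aut]
  congr 1

lemma comm_TA : T ^ 2 * A = A * T ^ 2 := by
  have h : T ^ 2 * A * (T ^ 2)⁻¹ = A := by
    rw [A, T, ← map_pow, ← map_inv, ← inl_aut]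
    congr 1
  calc T ^ 2 * A = T ^ 2 * A * (T ^ 2)⁻¹ * T ^ 2 := by group
    _ = A * T ^ 2 := by rw [h]

/-- The map on generators: `a ↦ A`, `b ↦ A⁻¹ * T`. -/
def f : Fin 2 → H := ![A, A⁻¹ * T]

lemma f_rel : ∀ r ∈ rels, FreeGroup.lift f r = 1 := by
  intro r hr
  rw [rels, Set.mem_singleton_iff] at hr
  subst hr
  simp only [map_mul, map_pow, map_inv, FreeGroup.lift_apply_of]
  have h0 : f 0 = A := rfl
  have h1 : f 1 = A⁻¹ * T := rfl
  rw [h0, h1]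
  have e1 : A * (A⁻¹ * T) = T := by group
  have e2 : (A⁻¹ * T * A) ^ 2 = A⁻¹ * (T ^ 2 * A) := by
    rw [sq, sq]; group
  have e3 : A⁻¹ * (T ^ 2 * A) = T ^ 2 := by rw [comm_TA]; group
  rw [e1, e2, e3]
  group

/-- The homomorphism `PresentedGroup rels →* H`. -/
def φ : PresentedGroup rels →* H := PresentedGroup.toGroup f_rel

/-- The candidate injection `FreeGroup (Fin 2) →* PresentedGroup rels`,
`x ↦ a`, `y ↦ (ab) a (ab)⁻¹`. -/
def ψ : FreeGroup (Fin 2) →* PresentedGroup rels :=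
  FreeGroup.lift ![PresentedGroup.of 0,
    (PresentedGroup.of 0 * PresentedGroup.of 1) * PresentedGroup.of 0 *
      (PresentedGroup.of 0 * PresentedGroup.of 1)⁻¹]

/-- The injective comparison map. -/
def χ : FreeGroup (Fin 2) →* H :=
  (inl : FreeGroup Bool →* H).comp (FreeGroup.freeGroupCongr finTwoEquiv).toMonoidHom

lemma χ_inj : Function.Injective χ :=
  inl_injective.comp (FreeGroup.freeGroupCongr finTwoEquiv).injective

lemma φ_comp_ψ : φ.comp ψ = χ := by
  apply FreeGroup.ext_hom
  intro i
  fin_cases i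
  · show φ (ψ (FreeGroup.of 0)) = χ (FreeGroup.of 0)
    have hψ : ψ (FreeGroup.of (0 : Fin 2)) = PresentedGroup.of 0 := by
      simp [ψ]
    rw [hψ]
    have h0 : φ (PresentedGroup.of (0 : Fin 2)) = A := PresentedGroup.toGroup.of f_rel
    rw [h0]
    simp [χ, A]
    rfl
  · show φ (ψ (FreeGroup.of 1)) = χ (FreeGroup.of 1)
    have hψ : ψ (FreeGroup.of (1 : Fin 2)) =
        (PresentedGroup.of 0 * PresentedGroup.of 1) * PresentedGroup.of 0 *
          (PresentedGroup.of 0 * PresentedGroup.of 1)⁻¹ := by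
      simp [ψ]
    rw [hψ]
    simp only [map_mul, map_inv]
    have h0 : φ (PresentedGroup.of (0 : Fin 2)) = A := PresentedGroup.toGroup.of f_rel
    have h1 : φ (PresentedGroup.of (1 : Fin 2)) = A⁻¹ * T := PresentedGroup.toGroup.of f_rel
    rw [h0, h1]
    have e1 : A * (A⁻¹ * T) = T := by group
    rw [e1, T_A_T]
    simp [χ]
    rfl

end BigAux

/-- The group `⟨a, b | (ab)² = (ba)²⟩` is big. -/
theorem presentedGroup_big : Big (PresentedGroup rels) := by
  refine ⟨BigAux.ψ, ?_⟩
  have h : Function.Injective (BigAux.φ.comp BigAux.ψ) := by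
    rw [BigAux.φ_comp_ψ]; exact BigAux.χ_inj
  exact Function.Injective.of_comp h
end

section
/- Let G be a group and x₁, x₂, x₃, x₄, x₅, x₆ ∈ G. Then the six relations x₁ = x₅x₄x₅⁻¹, x₂ = x₅x₄x₃x₂x₃⁻¹x₄⁻¹x₅⁻¹, x₃ = x₅x₄x₃x₂x₃x₂⁻¹x₃⁻¹x₄⁻¹x₅⁻¹, x₄ = x₅x₄x₃x₂x₁x₂⁻¹x₃⁻¹x₄⁻¹x₅⁻¹, x₅ = x₆, x₆ = x₆x₅x₄x₃x₂x₁x₅x₁⁻¹x₂⁻¹x₃⁻¹x₄⁻¹x₅⁻¹x₆⁻¹ hold simultaneously if and only if the relations x₅x₄x₃x₂ = x₂x₅x₄x₃, x₂x₅x₄x₃ = x₃x₂x₅x₄, x₄x₅x₄x₃x₂x₅ = x₅x₄x₃x₂x₅x₄, x₁ = x₅x₄x₅⁻¹, x₅ = x₆ hold simultaneously. -/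
/-- Simplification of the van Kampen relations induced by the singular point with
local equation `y(x+2y)(y²+x)(y²−x) = 0`. -/
theorem vanKampen_relations_simplification {G : Type*} [Group G] (x₁ x₂ x₃ x₄ x₅ x₆ : G) :
    (x₁ = x₅ * x₄ * x₅⁻¹ ∧
      x₂ = x₅ * x₄ * x₃ * x₂ * x₃⁻¹ * x₄⁻¹ * x₅⁻¹ ∧
      x₃ = x₅ * x₄ * x₃ * x₂ * x₃ * x₂⁻¹ * x₃⁻¹ * x₄⁻¹ * x₅⁻¹ ∧
      x₄ = x₅ * x₄ * x₃ * x₂ * x₁ * x₂⁻¹ * x₃⁻¹ * x₄⁻¹ * x₅⁻¹ ∧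
      x₅ = x₆ ∧
      x₆ = x₆ * x₅ * x₄ * x₃ * x₂ * x₁ * x₅ * x₁⁻¹ * x₂⁻¹ * x₃⁻¹ * x₄⁻¹ * x₅⁻¹ * x₆⁻¹) ↔
    (x₅ * x₄ * x₃ * x₂ = x₂ * x₅ * x₄ * x₃ ∧
      x₂ * x₅ * x₄ * x₃ = x₃ * x₂ * x₅ * x₄ ∧
      x₄ * x₅ * x₄ * x₃ * x₂ * x₅ = x₅ * x₄ * x₃ * x₂ * x₅ * x₄ ∧
      x₁ = x₅ * x₄ * x₅⁻¹ ∧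
      x₅ = x₆) := by
  constructor
  · rintro ⟨h1, h2, h3, h4, h5, h6⟩
    have A : x₅ * x₄ * x₃ * x₂ = x₂ * x₅ * x₄ * x₃ := by
      nth_rewrite 2 [h2]; group
    have e3a : x₃ * (x₅ * x₄ * x₃ * x₂) = x₅ * x₄ * x₃ * x₂ * x₃ := by
      nth_rewrite 1 [h3]; group
    have B : x₂ * x₅ * x₄ * x₃ = x₃ * x₂ * x₅ * x₄ := by
      apply mul_right_cancel (b := x₃)
      calc x₂ * x₅ * x₄ * x₃ * x₃ = (x₅ * x₄ * x₃ * x₂) * x₃ := by rw [A]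
        _ = x₃ * (x₅ * x₄ * x₃ * x₂) := e3a.symm
        _ = x₃ * (x₂ * x₅ * x₄ * x₃) := by rw [A]
        _ = x₃ * x₂ * x₅ * x₄ * x₃ := by group
    have C : x₄ * x₅ * x₄ * x₃ * x₂ * x₅ = x₅ * x₄ * x₃ * x₂ * x₅ * x₄ := by
      rw [h1] at h4
      nth_rewrite 1 [h4]; group
    exact ⟨A, B, C, h1, h5⟩
  · rintro ⟨A, B, C, h1, h5⟩
    have AB : x₅ * x₄ * x₃ * x₂ = x₃ * x₂ * x₅ * x₄ := A.trans B
    have C' : x₄ * (x₅ * x₄ * x₃ * x₂ * x₅) = x₅ * x₄ * x₃ * x₂ * x₅ * x₄ := by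
      simpa [mul_assoc] using C
    have comm3 : x₃ * (x₅ * x₄ * x₃ * x₂) = x₅ * x₄ * x₃ * x₂ * x₃ := by
      calc x₃ * (x₅ * x₄ * x₃ * x₂) = x₃ * (x₂ * x₅ * x₄ * x₃) := by rw [A]
        _ = x₃ * x₂ * x₅ * x₄ * x₃ := by group
        _ = x₅ * x₄ * x₃ * x₂ * x₃ := by rw [AB]
    have T : x₄ * x₃ * x₂ * x₅ * x₄ * x₅ = x₅ * x₄ * x₃ * x₂ * x₅ * x₄ := by
      calc x₄ * x₃ * x₂ * x₅ * x₄ * x₅ = x₄ * (x₃ * x₂ * x₅ * x₄ * x₅) := by group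
        _ = x₄ * (x₅ * x₄ * x₃ * x₂ * x₅) := by rw [← AB]
        _ = x₅ * x₄ * x₃ * x₂ * x₅ * x₄ := C'
    refine ⟨h1, ?_, ?_, ?_, h5, ?_⟩
    · rw [A]; group
    · rw [← comm3]; group
    · rw [h1]
      calc x₄ = x₄ * (x₅ * x₄ * x₃ * x₂ * x₅) * (x₅ * x₄ * x₃ * x₂ * x₅)⁻¹ := by group
        _ = (x₅ * x₄ * x₃ * x₂ * x₅ * x₄) * (x₅ * x₄ * x₃ * x₂ * x₅)⁻¹ := by rw [C']
        _ = x₅ * x₄ * x₃ * x₂ * (x₅ * x₄ * x₅⁻¹) * x₂⁻¹ * x₃⁻¹ * x₄⁻¹ * x₅⁻¹ := by group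
    · rw [← h5, h1]
      calc x₅ = x₅ * x₅ * ((x₄ * x₃ * x₂ * x₅ * x₄ * x₅) * (x₄ * x₃ * x₂ * x₅ * x₄ * x₅)⁻¹)
            * x₅ * x₅⁻¹ * x₅⁻¹ := by group
        _ = x₅ * x₅ * ((x₄ * x₃ * x₂ * x₅ * x₄ * x₅) * (x₅ * x₄ * x₃ * x₂ * x₅ * x₄)⁻¹)
            * x₅ * x₅⁻¹ * x₅⁻¹ := by nth_rewrite 2 [T]; rfl
        _ = x₅ * x₅ * x₄ * x₃ * x₂ * (x₅ * x₄ * x₅⁻¹) * x₅ * (x₅ * x₄ * x₅⁻¹)⁻¹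
            * x₂⁻¹ * x₃⁻¹ * x₄⁻¹ * x₅⁻¹ * x₅⁻¹ := by group
end
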